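/- arXiv:0811.0537 — 7 statements merged into one kernel-verified Lean document; each statement's English description precedes it below -/
import Mathlib

section
/- The matching relation of a nested word is non-crossing: if M(i,j) and M(i',j') hold with i < i' < j, then j' < j (equivalently, there are no positions i < i' < j < j' with M(i,j) and M(i',j')). -/
/-!
Apply axiom (3) to the call `i'` and the return `j`: it yields `k ∈ [i', j]` with `M i' k` or
`M k j`. The second would force `k = i < i'`, so `M i' k`, i.e. `k = j' ≤ j`; and `j' ≠ j`,
because `j` is already matched with `i ≠ i'`.
-/

/-- A matching on the interval `[1,n]`: a binary relation `M` together with unary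
predicates `call` and `ret` satisfying the nested-word matching axioms. -/
def IsMatching (n : ℕ) (M : ℕ → ℕ → Prop) (call ret : ℕ → Prop) : Prop :=
  (∀ i j, M i j → 1 ≤ i ∧ j ≤ n) ∧
  (∀ i, call i → 1 ≤ i ∧ i ≤ n) ∧
  (∀ j, ret j → 1 ≤ j ∧ j ≤ n) ∧
  (∀ i j, M i j → call i ∧ ret j ∧ i < j) ∧
  (∀ i j j', M i j → M i j' → j = j') ∧
  (∀ i i' j, M i j → M i' j → i = i') ∧
  (∀ i j, i ≤ j → call i → ret j → ∃ k, i ≤ k ∧ k ≤ j ∧ (M i k ∨ M k j))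

namespace IsMatching

variable {n : ℕ} {M : ℕ → ℕ → Prop} {call ret : ℕ → Prop}

theorem call_of_rel (hm : IsMatching n M call ret) {i j : ℕ} (h : M i j) : call i :=
  (hm.2.2.2.1 i j h).1

theorem ret_of_rel (hm : IsMatching n M call ret) {i j : ℕ} (h : M i j) : ret j :=
  (hm.2.2.2.1 i j h).2.1

theorem right_unique (hm : IsMatching n M call ret) {i j j' : ℕ} (h : M i j) (h' : M i j') :
    j = j' :=
  hm.2.2.2.2.1 i j j' h h'

theorem left_unique (hm : IsMatching n M call ret) {i i' j : ℕ} (h : M i j) (h' : M i' j) :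
    i = i' :=
  hm.2.2.2.2.2.1 i i' j h h'

theorem exists_rel_between (hm : IsMatching n M call ret) {i j : ℕ} (hij : i ≤ j)
    (hi : call i) (hj : ret j) : ∃ k, i ≤ k ∧ k ≤ j ∧ (M i k ∨ M k j) :=
  hm.2.2.2.2.2.2 i j hij hi hj

end IsMatching

/-- The matching relation of a nested word is non-crossing. -/
theorem matching_noncrossing {n : ℕ} {M : ℕ → ℕ → Prop} {call ret : ℕ → Prop}
    (hm : IsMatching n M call ret) {i j i' j' : ℕ}
    (h : M i j) (h' : M i' j') (h1 : i < i') (h2 : i' < j) :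
    j' < j := by
  obtain ⟨k, hi'k, hkj, hk | hk⟩ :=
    hm.exists_rel_between h2.le (hm.call_of_rel h') (hm.ret_of_rel h)
  · obtain rfl := hm.right_unique h' hk
    refine hkj.lt_of_ne ?_
    rintro rfl
    exact h1.ne (hm.left_unique h hk)
  · obtain rfl := hm.left_unique h hk
    exact absurd h1 hi'k.not_gt
end

section
/- The closed intervals determined by the matching edges of a nested word form a laminar family: if M(i,j) and M(i',j') with (i,j) ≠ (i',j'), then either the intervals [i,j] and [i',j'] are disjoint, or one is strictly contained in the open interior of the other. -/
/-- The intervals determined by matching edges form a laminar family: any two distinct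
matched intervals are disjoint, or one is strictly contained in the interior of the other. -/
theorem matching_laminar {n : ℕ} {M : ℕ → ℕ → Prop} {call ret : ℕ → Prop}
    (hm : IsMatching n M call ret) {i j i' j' : ℕ}
    (h : M i j) (h' : M i' j') (hne : ¬ (i = i' ∧ j = j')) :
    (j < i' ∨ j' < i) ∨ (i < i' ∧ j' < j) ∨ (i' < i ∧ j < j') := by
  obtain ⟨_, _, _, h4, h5, h6, h7⟩ := hm
  obtain ⟨hci, hrj, hij⟩ := h4 i j h
  obtain ⟨hci', hrj', hij'⟩ := h4 i' j' h'
  rcases lt_trichotomy i i' with hlt | heq | hgt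
  · -- i < i'
    rcases lt_or_ge j i' with hji' | hi'j
    · exact Or.inl (Or.inl hji')
    · -- i < i' ≤ j
      rcases lt_trichotomy j' j with hjj | hjj | hjj
      · exact Or.inr (Or.inl ⟨hlt, hjj⟩)
      · exact absurd (h6 i i' j h (hjj ▸ h')) hlt.ne
      · -- crossing: i < i' ≤ j < j'
        obtain ⟨k, hk1, hk2, hk3 | hk3⟩ := h7 i' j hi'j hci' hrj
        · exact absurd (h5 i' k j' hk3 h') (by omega)
        · exact absurd (h6 k i j hk3 h) (by omega)
  · subst heq
    exact absurd ⟨rfl, h5 i j j' h h'⟩ hne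
  · -- i' < i
    rcases lt_or_ge j' i with hji | hij2
    · exact Or.inl (Or.inr hji)
    · rcases lt_trichotomy j j' with hjj | hjj | hjj
      · exact Or.inr (Or.inr ⟨hgt, hjj⟩)
      · exact absurd (h6 i' i j' h' (hjj ▸ h)) hgt.ne
      · obtain ⟨k, hk1, hk2, hk3 | hk3⟩ := h7 i j' hij2 hci hrj'
        · exact absurd (h5 i k j hk3 h) (by omega)
        · exact absurd (h6 k i' j' hk3 h') (by omega)
end

section
/- Let i be a position strictly inside some matched call, i.e., there exist c, r with M(c,r) and c < i < r. Let C(i) be the greatest matched call c with c < i and r(c) > i, and let R(i) be the least matched return r with r > i whose matching call is less than i. Then M(C(i), R(i)) holds; that is, the innermost enclosing call of i and the innermost enclosing return of i are matched to each other. -/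
namespace IsMatching

variable {n : ℕ} {M : ℕ → ℕ → Prop} {call ret : ℕ → Prop}

/-- The matching axiom applied to `c ≤ r` yields a partner of `c` in `[c, r]` or of `r` in
`[c, r]`; by injectivity that partner is `r'` or `c'`, and the nesting squeezes it onto
`r` or `c` respectively. -/
theorem rel_of_nested (hm : IsMatching n M call ret) {c r c' r' : ℕ}
    (hcr' : M c r') (hc'r : M c' r) (hc'c : c' ≤ c) (hcr : c ≤ r) (hrr' : r ≤ r') :
    M c r := by
  obtain ⟨-, -, -, hcallret, hfun, hinj, hwell⟩ := hm
  obtain ⟨k, hck, hkr, hk | hk⟩ :=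
    hwell c r hcr (hcallret _ _ hcr').1 (hcallret _ _ hc'r).2.1
  · obtain rfl : k = r' := hfun _ _ _ hk hcr'
    rwa [le_antisymm hkr hrr'] at hk
  · obtain rfl : k = c' := hinj _ _ _ hk hc'r
    rwa [le_antisymm hc'c hck] at hk

end IsMatching

/-- The innermost enclosing call `C i` and innermost enclosing return `R i` of a
position `i` strictly inside some matched call are matched to each other. -/
theorem innermost_call_matches_innermost_ret {n : ℕ} {M : ℕ → ℕ → Prop}
    {call ret : ℕ → Prop} (hm : IsMatching n M call ret) {i C R : ℕ}
    (hC : ∃ rC, M C rC ∧ C < i ∧ i < rC)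
    (hCmax : ∀ c r, M c r → c < i → i < r → c ≤ C)
    (hR : ∃ cR, M cR R ∧ cR < i ∧ i < R)
    (hRmin : ∀ c r, M c r → c < i → i < r → R ≤ r) :
    M C R := by
  obtain ⟨rC, hMC, hCi, hirC⟩ := hC
  obtain ⟨cR, hMR, hcRi, hiR⟩ := hR
  exact hm.rel_of_nested hMC hMR (hCmax _ _ hMR hcRi hiR) (hCi.trans hiR).le
    (hRmin _ _ hMC hCi hirC)
end

section
/- The summary path from i to j is a shortest directed path from i to j in the graph whose edges are the linear successor edges (p, p+1) and the nesting edges (c, r(c)) for matched calls c: the length (number of edges) of the summary path from i to j is less than or equal to the length of any directed path from i to j using successor and nesting edges. -/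
/-- One step of a summary path with target `j`: from `p` jump to the matching
return `r` of `p` if `p` is a matched call with `r ≤ j`, otherwise move to `p+1`. -/
def SummaryStep (M : ℕ → ℕ → Prop) (j p q : ℕ) : Prop :=
  (∃ r, M p r ∧ r ≤ j ∧ q = r) ∨ ((¬ ∃ r, M p r ∧ r ≤ j) ∧ q = p + 1)

/-- `f 0, f 1, …, f k` is a summary path from `i` to `j`. -/
def IsSummaryPath (M : ℕ → ℕ → Prop) (i j : ℕ) (f : ℕ → ℕ) (k : ℕ) : Prop :=
  f 0 = i ∧ f k = j ∧ (∀ p, p < k → f p < f (p + 1)) ∧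
    ∀ p, p < k → SummaryStep M j (f p) (f (p + 1))

/-- A directed path from `i` to `j` using successor edges and nesting edges. -/
def IsEdgePath (M : ℕ → ℕ → Prop) (i j : ℕ) (g : ℕ → ℕ) (m : ℕ) : Prop :=
  g 0 = i ∧ g m = j ∧ ∀ p, p < m → g (p + 1) = g p + 1 ∨ M (g p) (g (p + 1))

/-! Along any edge path the positions strictly increase, and a nesting edge starting in
`[c, r(c))` cannot jump beyond `r(c)`: nesting edges do not cross. Hence an edge path from
a matched call `c` to a target `j ≥ r(c)` must visit `r(c)`, and an edge path from an
unmatched position (or a call returning beyond `j`) must take the successor edge first. So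
every edge path from `i` to `j` visits the second vertex of the summary path after at least
one edge, and induction on the length of the edge path concludes. -/

theorem Nat.add_le_of_forall_lt_succ {h : ℕ → ℕ} {k : ℕ} (hs : ∀ p < k, h p < h (p + 1)) :
    h 0 + k ≤ h k := by
  induction k with
  | zero => rfl
  | succ k ih =>
    have := ih fun p hp => hs p (by omega)
    have := hs k k.lt_succ_self
    omega

namespace IsMatching

variable {n : ℕ} {M : ℕ → ℕ → Prop} {call ret : ℕ → Prop}

theorem lt_of_rel (hm : IsMatching n M call ret) {c r : ℕ} (hcr : M c r) : c < r :=
  (hm.2.2.2.1 c r hcr).2.2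

theorem le_of_mem_Ico (hm : IsMatching n M call ret) {c r p q : ℕ} (hcr : M c r)
    (hpq : M p q) (hp : p ∈ Set.Ico c r) : q ≤ r := by
  obtain ⟨hcp, hpr⟩ := hp
  rcases hcp.eq_or_lt with rfl | hcp
  · exact (hm.2.2.2.2.1 c q r hpq hcr).le
  obtain ⟨x, hpx, hxr, hx⟩ :=
    hm.2.2.2.2.2.2 p r hpr.le (hm.2.2.2.1 p q hpq).1 (hm.2.2.2.1 c r hcr).2.1
  rcases hx with hpx' | hxr'
  · exact (hm.2.2.2.2.1 p q x hpq hpx') ▸ hxr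
  · exact absurd (hm.2.2.2.2.2.1 c x r hcr hxr') (by omega)

end IsMatching

namespace IsEdgePath

variable {n : ℕ} {M : ℕ → ℕ → Prop} {call ret : ℕ → Prop} {i j : ℕ} {g : ℕ → ℕ} {m : ℕ}

theorem drop (hg : IsEdgePath M i j g m) {t : ℕ} (ht : t ≤ m) :
    IsEdgePath M (g t) j (fun p => g (t + p)) (m - t) :=
  ⟨rfl, by simpa [Nat.add_sub_cancel' ht] using hg.2.1,
    fun p hp => hg.2.2 (t + p) (by omega)⟩

theorem add_le (hm : IsMatching n M call ret) (hg : IsEdgePath M i j g m) : i + m ≤ j := by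
  have := Nat.add_le_of_forall_lt_succ (h := g) (k := m) fun p hp =>
    (hg.2.2 p hp).elim (fun h => by omega) hm.lt_of_rel
  rwa [hg.1, hg.2.1] at this

theorem exists_eq_ret (hm : IsMatching n M call ret) {c r : ℕ} (hcr : M c r) (hrj : r ≤ j)
    (hg : IsEdgePath M i j g m) (hi : i ∈ Set.Ico c r) : ∃ t, 0 < t ∧ t ≤ m ∧ g t = r := by
  induction m generalizing i g with
  | zero =>
    have hij : i = j := hg.1.symm.trans hg.2.1
    exact absurd hi.2 (by omega)
  | succ m ih =>
    have hnext : i < g 1 ∧ g 1 ≤ r := by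
      rcases hg.2.2 0 m.succ_pos with h | h <;> rw [zero_add, hg.1] at h
      · exact ⟨by omega, by have := hi.2; omega⟩
      · exact ⟨hm.lt_of_rel h, hm.le_of_mem_Ico hcr h hi⟩
    rcases hnext.2.eq_or_lt with hr | hr
    · exact ⟨1, Nat.one_pos, by omega, hr⟩
    obtain ⟨t, -, ht, hgt⟩ := ih (hg.drop (Nat.le_add_left 1 m)) ⟨hi.1.trans hnext.1.le, hr⟩
    exact ⟨1 + t, by omega, by omega, hgt⟩

theorem exists_eq_of_summaryStep (hm : IsMatching n M call ret) {s : ℕ}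
    (hs : SummaryStep M j i s) (hij : i < j) (hg : IsEdgePath M i j g m) :
    ∃ t, 0 < t ∧ t ≤ m ∧ g t = s := by
  rcases hs with ⟨r, hir, hrj, rfl⟩ | ⟨hnot, rfl⟩
  · exact hg.exists_eq_ret hm hir hrj ⟨le_rfl, hm.lt_of_rel hir⟩
  cases m with
  | zero => exact absurd (hg.1.symm.trans hg.2.1) hij.ne
  | succ m =>
    refine ⟨1, Nat.one_pos, Nat.le_add_left 1 m, ?_⟩
    rcases hg.2.2 0 m.succ_pos with h | h <;> rw [zero_add, hg.1] at h
    · exact h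
    · exact absurd ⟨g 1, h, le_of_add_le_left ((hg.drop (Nat.le_add_left 1 m)).add_le hm)⟩ hnot

end IsEdgePath

namespace IsSummaryPath

variable {M : ℕ → ℕ → Prop} {i j : ℕ} {f : ℕ → ℕ} {k : ℕ}

theorem add_le (hf : IsSummaryPath M i j f k) : i + k ≤ j := by
  simpa [hf.1, hf.2.1] using Nat.add_le_of_forall_lt_succ hf.2.2.1

theorem tail (hf : IsSummaryPath M i j f (k + 1)) :
    IsSummaryPath M (f 1) j (fun p => f (1 + p)) k :=
  ⟨rfl, by simpa [Nat.add_comm] using hf.2.1, fun p hp => hf.2.2.1 (1 + p) (by omega),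
    fun p hp => hf.2.2.2 (1 + p) (by omega)⟩

theorem summaryStep_zero (hf : IsSummaryPath M i j f (k + 1)) : SummaryStep M j i (f 1) :=
  hf.1 ▸ hf.2.2.2 0 k.succ_pos

end IsSummaryPath

/-- The summary path from `i` to `j` is a shortest directed path from `i` to `j`
in the graph whose edges are successor edges and nesting edges. -/
theorem summaryPath_shortest {n : ℕ} {M : ℕ → ℕ → Prop} {call ret : ℕ → Prop}
    (hm : IsMatching n M call ret) {i j k m : ℕ} {f g : ℕ → ℕ}
    (hpath : IsSummaryPath M i j f k) (hedge : IsEdgePath M i j g m) :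
    k ≤ m := by
  induction m using Nat.strong_induction_on generalizing i k f g with
  | _ m ih =>
  cases k with
  | zero => exact m.zero_le
  | succ k =>
    have hij : i < j := by have := hpath.add_le; omega
    obtain ⟨t, ht0, htm, hgt⟩ := hedge.exists_eq_of_summaryStep hm hpath.summaryStep_zero hij
    have := ih (m - t) (by omega) hpath.tail (hgt ▸ hedge.drop htm)
    omega
end

section
/- Every summary path decomposes into a summary-up path followed by a summary-down path: if i = i_0 < i_1 < ... < i_k = j is a summary path, then there exists an index m ≤ k such that for all p < m the step from i_p to i_{p+1} is not a call edge (i.e., it is not the case that i_p is a call, i_{p+1} = i_p + 1, and i_{p+1} is not a return), and for all p with m ≤ p < k the step from i_p to i_{p+1} is not a return edge (i.e., it is not the case that i_{p+1} = i_p + 1 and i_{p+1} is a return and i_p is not a call). -/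
/-!
Cut the path at its first call edge `f m → f m + 1`. Since that step does not jump, the
call `f m` has no matching return up to `j`. A later return edge `f p → f p + 1` would
then, by the last matching axiom, return from a call `c` with `f m < c < f p`. But a
summary path that passes a matched call whose return lies before `j` cannot land strictly
between the two: it either jumps from `c` to its return, or jumps over both, because
matching edges do not cross; yet `f p` lies inside `(c, r(c))`.
-/

variable {n : ℕ} {M : ℕ → ℕ → Prop} {call ret : ℕ → Prop}

namespace IsMatching

variable (hm : IsMatching n M call ret)
include hm

theorem call_ret_lt {a b : ℕ} (hab : M a b) : call a ∧ ret b ∧ a < b :=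
  hm.2.2.2.1 a b hab

theorem ret_unique {a b b' : ℕ} (hab : M a b) (hab' : M a b') : b = b' :=
  hm.2.2.2.2.1 a b b' hab hab'

theorem call_unique {a a' b : ℕ} (hab : M a b) (ha'b : M a' b) : a = a' :=
  hm.2.2.2.2.2.1 a a' b hab ha'b

theorem exists_mem_Icc_of_call_ret {a b : ℕ} (hab : a ≤ b) (ha : call a) (hb : ret b) :
    ∃ e, a ≤ e ∧ e ≤ b ∧ (M a e ∨ M e b) :=
  hm.2.2.2.2.2.2 a b hab ha hb

theorem ret_lt_of_nested {a b c d : ℕ} (hab : M a b) (hcd : M c d) (hac : a < c)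
    (hcb : c < b) : d < b := by
  obtain ⟨e, hce, heb, hMce | hMeb⟩ :=
    hm.exists_mem_Icc_of_call_ret hcb.le (hm.call_ret_lt hcd).1 (hm.call_ret_lt hab).2.1
  · obtain rfl : d = e := hm.ret_unique hcd hMce
    rcases heb.lt_or_eq with hdb | rfl
    · exact hdb
    · exact absurd (hm.call_unique hab hcd) hac.ne
  · obtain rfl : e = a := hm.call_unique hMeb hab
    omega

theorem ret_le_of_summaryStep {j a b c e : ℕ} (hstep : SummaryStep M j a b) (hce : M c e)
    (hej : e ≤ j) (hac : a ≤ c) (hcb : c < b) : e ≤ b := by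
  rcases hstep with ⟨r, hMar, -, rfl⟩ | ⟨hno, rfl⟩
  · rcases hac.eq_or_lt with rfl | hac
    · exact (hm.ret_unique hce hMar).le
    · exact (hm.ret_lt_of_nested hMar hce hac hcb).le
  · obtain rfl : a = c := by omega
    exact absurd ⟨e, hce, hej⟩ hno

end IsMatching

namespace IsSummaryPath

variable {i j k : ℕ} {f : ℕ → ℕ} (hpath : IsSummaryPath M i j f k)
include hpath

theorem monotoneOn : MonotoneOn f (Set.Iic k) :=
  (strictMonoOn_Iic_of_lt_succ hpath.2.2.1).monotoneOn

theorem le_last {p : ℕ} (hpk : p ≤ k) : f p ≤ j :=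
  hpath.2.1 ▸ hpath.monotoneOn (Set.mem_Iic.2 hpk) Set.self_mem_Iic hpk

theorem first_le {p : ℕ} (hpk : p ≤ k) : i ≤ f p :=
  hpath.1 ▸ hpath.monotoneOn (Set.mem_Iic.2 k.zero_le) (Set.mem_Iic.2 hpk) p.zero_le

theorem ret_le (hm : IsMatching n M call ret) {c e : ℕ} (hce : M c e) (hej : e ≤ j)
    (hic : i ≤ c) : ∀ p ≤ k, c < f p → e ≤ f p := by
  obtain ⟨rfl, -, hinc, hstep⟩ := hpath
  intro p hpk hcp
  induction p with
  | zero => omega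
  | succ p ih =>
    by_cases hcp' : c < f p
    · exact (ih (by omega) hcp').trans (hinc p (by omega)).le
    · exact hm.ret_le_of_summaryStep (hstep p (by omega)) hce hej (by omega) hcp

end IsSummaryPath

/-- Every summary path decomposes into a summary-up path (no call edges) followed by
a summary-down path (no return edges). -/
theorem summaryPath_up_then_down {n : ℕ} {M : ℕ → ℕ → Prop} {call ret : ℕ → Prop}
    (hm : IsMatching n M call ret) {i j k : ℕ} {f : ℕ → ℕ}
    (hpath : IsSummaryPath M i j f k) :
    ∃ m ≤ k,
      (∀ p, p < m → ¬ (call (f p) ∧ f (p + 1) = f p + 1 ∧ ¬ ret (f (p + 1)))) ∧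
      (∀ p, m ≤ p → p < k →
        ¬ (f (p + 1) = f p + 1 ∧ ret (f (p + 1)) ∧ ¬ call (f p))) := by
  classical
  by_cases hcall_edge : ∃ m, m < k ∧ call (f m) ∧ f (m + 1) = f m + 1 ∧ ¬ ret (f (m + 1))
  swap
  · push Not at hcall_edge
    exact ⟨k, le_rfl, fun p hp ⟨hc, hs, hr⟩ => hr (hcall_edge p hp hc hs), by omega⟩
  obtain ⟨hmk, hcall, -, hnot_ret⟩ := Nat.find_spec hcall_edge
  refine ⟨_, hmk.le, fun p hp hedge => Nat.find_min hcall_edge hp ⟨hp.trans hmk, hedge⟩, ?_⟩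
  set m := Nat.find hcall_edge
  rintro p hmp hpk ⟨hsucc, hret, hnot_call⟩
  have hunmatched : ¬ ∃ r, M (f m) r ∧ r ≤ j := by
    rcases hpath.2.2.2 m hmk with ⟨r, hMr, -, hr⟩ | ⟨hno, -⟩
    · exact absurd (hr ▸ (hm.call_ret_lt hMr).2.1) hnot_ret
    · exact hno
  have hfm : f m ≤ f p := hpath.monotoneOn (Set.mem_Iic.2 hmk.le) (Set.mem_Iic.2 hpk.le) hmp
  have hfj : f (p + 1) ≤ j := hpath.le_last hpk
  obtain ⟨c, hmc, hcp, hMmc | hMcp⟩ :=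
    hm.exists_mem_Icc_of_call_ret (by omega) hcall hret
  · exact hunmatched ⟨c, hMmc, hcp.trans hfj⟩
  have hcf : c < f p := by
    obtain ⟨hc_call, -, hc_lt⟩ := hm.call_ret_lt hMcp
    exact lt_of_le_of_ne (by omega) fun h => hnot_call (h ▸ hc_call)
  have := hpath.ret_le hm hMcp hfj ((hpath.first_le hmk.le).trans hmc) p hpk.le hcf
  omega
end

section
/- A position z with i < z < j lies on the summary path from i to j if and only if z is not strictly inside a matched call whose extent lies within [i,j]; precisely, z is one of the positions of the summary path from i to j if and only if there is no matched call c with i ≤ c < z < r(c) ≤ j. -/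
/-! A step of a summary path that skips a position must be a jump over a matched call. If `z`
were inside a call `c < z < r(c)` within `[i,j]`, look at the step leaving the last path
position `≤ c`: it cannot start at `c` (it would jump to `r(c)`, past `z`), and a jump from
before `c` to a position in `(c, z]` would cross the pair `(c, r(c))`, which well-nestedness
forbids. Conversely the step passing over `z` is a jump from a matched call `c < z` with
`r(c) ≤ j`. -/

theorem exists_le_and_lt_succ {α : Type*} [LinearOrder α] {f : ℕ → α} {k : ℕ} {x : α}
    (h0 : f 0 ≤ x) (hk : x < f k) : ∃ q < k, f q ≤ x ∧ x < f (q + 1) := by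
  induction k with
  | zero => exact absurd h0 hk.not_ge
  | succ k ih =>
    by_cases hx : x < f k
    · obtain ⟨q, hq, hfq⟩ := ih hx
      exact ⟨q, hq.trans k.lt_succ_self, hfq⟩
    · exact ⟨k, k.lt_succ_self, not_lt.mp hx, hk⟩

namespace IsMatching

variable {n : ℕ} {M : ℕ → ℕ → Prop} {call ret : ℕ → Prop}

theorem ret_unique_s12 (hm : IsMatching n M call ret) {c r r' : ℕ} (h : M c r) (h' : M c r') :
    r = r' :=
  hm.2.2.2.2.1 c r r' h h'

theorem not_cross (hm : IsMatching n M call ret) {c₁ r₁ c₂ r₂ : ℕ} (h₁ : M c₁ r₁)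
    (h₂ : M c₂ r₂) (hc : c₁ < c₂) (hcr : c₂ < r₁) (hr : r₁ < r₂) : False := by
  obtain ⟨-, -, -, hcall, hret_unique, hcall_unique, hcross⟩ := hm
  obtain ⟨m, hcm, hmr, hm₂ | hm₁⟩ :=
    hcross c₂ r₁ hcr.le (hcall c₂ r₂ h₂).1 (hcall c₁ r₁ h₁).2.1
  · exact (hmr.trans_lt hr).ne (hret_unique c₂ r₂ m h₂ hm₂).symm
  · exact (hc.trans_le hcm).ne (hcall_unique c₁ m r₁ h₁ hm₁)

end IsMatching

namespace SummaryStep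

variable {M : ℕ → ℕ → Prop} {j p q : ℕ}

theorem matches_of_lt_of_lt (h : SummaryStep M j p q) {x : ℕ} (hpx : p < x) (hxq : x < q) :
    M p q ∧ q ≤ j := by
  rcases h with ⟨r, hM, hrj, rfl⟩ | ⟨-, rfl⟩
  · exact ⟨hM, hrj⟩
  · omega

theorem eq_of_matches {n : ℕ} {call ret : ℕ → Prop} (hm : IsMatching n M call ret)
    (h : SummaryStep M j p q) {r : ℕ} (hM : M p r) (hrj : r ≤ j) : q = r := by
  rcases h with ⟨r', hM', -, rfl⟩ | ⟨hno, -⟩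
  · exact hm.ret_unique_s12 hM' hM
  · exact absurd ⟨r, hM, hrj⟩ hno

end SummaryStep

theorem IsSummaryPath.strictMonoOn {M : ℕ → ℕ → Prop} {i j k : ℕ} {f : ℕ → ℕ}
    (hpath : IsSummaryPath M i j f k) : StrictMonoOn f (Set.Iic k) :=
  strictMonoOn_Iic_of_lt_succ hpath.2.2.1

/-- A position `z` with `i < z < j` lies on the summary path from `i` to `j` iff it is
not strictly inside a matched call whose extent lies within `[i,j]`. -/
theorem summaryPath_mem_iff {n : ℕ} {M : ℕ → ℕ → Prop} {call ret : ℕ → Prop}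
    (hm : IsMatching n M call ret) {i j k z : ℕ} {f : ℕ → ℕ}
    (hpath : IsSummaryPath M i j f k) (hiz : i < z) (hzj : z < j) :
    (∃ p ≤ k, f p = z) ↔ ¬ ∃ c r, M c r ∧ i ≤ c ∧ c < z ∧ z < r ∧ r ≤ j := by
  have hmono : MonotoneOn f (Set.Iic k) := hpath.strictMonoOn.monotoneOn
  obtain ⟨hf0, hfk, -, hstep⟩ := hpath
  constructor
  · rintro ⟨p, hpk, rfl⟩ ⟨c, r, hcr, hic, hcz, hzr, hrj⟩
    obtain ⟨q, hqp, hqc, hcq⟩ := exists_le_and_lt_succ (hf0 ▸ hic) hcz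
    have hq_le : f (q + 1) ≤ f p := hmono (Set.mem_Iic.mpr (by omega)) (Set.mem_Iic.mpr hpk) hqp
    rcases hqc.eq_or_lt with rfl | hqc
    · have := (hstep q (by omega)).eq_of_matches hm hcr hrj
      omega
    · obtain ⟨hM, -⟩ := (hstep q (by omega)).matches_of_lt_of_lt hqc hcq
      exact hm.not_cross hM hcr hqc hcq (by omega)
  · intro hinside
    by_contra hoff
    obtain ⟨q, hqk, hqz, hzq⟩ := exists_le_and_lt_succ (hf0 ▸ hiz.le) (hfk ▸ hzj)
    have hqz : f q < z := hqz.lt_of_ne fun h ↦ hoff ⟨q, hqk.le, h⟩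
    obtain ⟨hM, hj⟩ := (hstep q hqk).matches_of_lt_of_lt hqz hzq
    have hiq : i ≤ f q := hf0 ▸ hmono (Set.mem_Iic.mpr k.zero_le) (Set.mem_Iic.mpr hqk.le) q.zero_le
    exact hinside ⟨f q, f (q + 1), hM, hiq, hqz, hzq, hj⟩
end

section
/- If a summary path from i to j takes a call edge at some step (enters a matched call c with r(c) > j, or an unmatched call), then all subsequent positions of the path are strictly between c and min(r(c), j]; in particular, once a summary path uses a call edge it never subsequently uses a return edge. -/
/-!
The call edge at `c = f q` means that `c` has no matching return `≤ j`, so the rest of the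
path stays in `(c, min (r c) j]`. Suppose a later step `f p → f p + 1 = r'` were a return
edge. Since `c` is a call and `r'` a return, the matching axioms give a call `m ∈ [c, r')`
matched with `r'`, and `m ≠ f p` because `f p` is not a call, so the path has already
passed `m`. But matchings are well nested, so a summary path that passes a call whose
return is `≤ j` has already reached that return: `r' ≤ f p`, which is absurd.
-/

namespace IsMatching

variable {n : ℕ} {M : ℕ → ℕ → Prop} {call ret : ℕ → Prop}

theorem not_crossing (hm : IsMatching n M call ret) {a b c d : ℕ}
    (hab : M a b) (hcd : M c d) (hac : a < c) (hcb : c < b) (hbd : b < d) : False := by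
  obtain ⟨-, -, -, hMcr, hMfun, hMinj, hnest⟩ := hm
  obtain ⟨e, hce, heb, hce' | heb'⟩ :=
    hnest c b hcb.le (hMcr c d hcd).1 (hMcr a b hab).2.1
  · exact absurd (hMfun c e d hce' hcd) (by omega)
  · exact absurd (hMinj e a b heb' hab) (by omega)

end IsMatching

namespace SummaryStep

variable {n : ℕ} {M : ℕ → ℕ → Prop} {call ret : ℕ → Prop} {j p q : ℕ}

theorem not_exists_match_of_not_ret (hm : IsMatching n M call ret)
    (hstep : SummaryStep M j p q) (hq : ¬ ret q) : ¬ ∃ r, M p r ∧ r ≤ j := by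
  obtain ⟨-, -, -, hMcr, -, -, -⟩ := hm
  rcases hstep with ⟨r, hpr, -, rfl⟩ | ⟨hnone, -⟩
  · exact absurd (hMcr p q hpr).2.1 hq
  · exact hnone

/-- Either the step jumps from `m` to `r` itself, or it jumps over a pair enclosing `m`. -/
theorem match_le (hm : IsMatching n M call ret) (hstep : SummaryStep M j p q)
    {m r : ℕ} (hpm : p ≤ m) (hmq : m < q) (hmr : M m r) (hrj : r ≤ j) : r ≤ q := by
  have ⟨_, _, _, _, hMfun, _, _⟩ := hm
  rcases hstep with ⟨q, hpq, -, rfl⟩ | ⟨hnone, rfl⟩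
  · rcases hpm.eq_or_lt with rfl | hpm
    · exact (hMfun p r q hmr hpq).le
    · by_contra! hqr
      exact hm.not_crossing hpq hmr hpm hmq hqr
  · exact absurd ⟨r, (show m = p by omega) ▸ hmr, hrj⟩ hnone

end SummaryStep

theorem Nat.exists_le_lt_succ_of_le_lt {f : ℕ → ℕ} {a b m : ℕ} (hab : a ≤ b)
    (ham : f a ≤ m) (hmb : m < f b) : ∃ s, a ≤ s ∧ s < b ∧ f s ≤ m ∧ m < f (s + 1) := by
  induction b, hab using Nat.le_induction with
  | base => omega
  | succ b hab ih =>
    by_cases hbm : f b ≤ m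
    · exact ⟨b, hab, b.lt_succ_self, hbm, hmb⟩
    · obtain ⟨s, has, hsb, hs⟩ := ih (by omega)
      exact ⟨s, has, hsb.trans b.lt_succ_self, hs⟩

namespace IsSummaryPath

variable {n : ℕ} {M : ℕ → ℕ → Prop} {call ret : ℕ → Prop} {i j k : ℕ} {f : ℕ → ℕ}

theorem strictMonoOn_s16 (hpath : IsSummaryPath M i j f k) : StrictMonoOn f (Set.Iic k) :=
  strictMonoOn_Iic_of_lt_succ hpath.2.2.1

theorem apply_lt_apply (hpath : IsSummaryPath M i j f k) {a b : ℕ} (hab : a < b)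
    (hbk : b ≤ k) : f a < f b :=
  hpath.strictMonoOn_s16 (Set.mem_Iic.2 (hab.le.trans hbk)) hbk hab

theorem apply_le_apply (hpath : IsSummaryPath M i j f k) {a b : ℕ} (hab : a ≤ b)
    (hbk : b ≤ k) : f a ≤ f b :=
  hpath.strictMonoOn_s16.monotoneOn (Set.mem_Iic.2 (hab.trans hbk)) hbk hab

theorem le_target (hpath : IsSummaryPath M i j f k) {p : ℕ} (hp : p ≤ k) : f p ≤ j :=
  hpath.2.1 ▸ hpath.apply_le_apply hp le_rfl

theorem match_le (hm : IsMatching n M call ret) (hpath : IsSummaryPath M i j f k)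
    {a b m r : ℕ} (hab : a ≤ b) (hbk : b ≤ k) (ham : f a ≤ m) (hmb : m < f b)
    (hmr : M m r) (hrj : r ≤ j) : r ≤ f b := by
  obtain ⟨s, -, hsb, hsm, hms⟩ := Nat.exists_le_lt_succ_of_le_lt hab ham hmb
  calc r ≤ f (s + 1) := (hpath.2.2.2 s (by omega)).match_le hm hsm hms hmr hrj
    _ ≤ f b := hpath.apply_le_apply hsb hbk

end IsSummaryPath

/-- Once a summary path takes a call edge at position `c = f q`, all subsequent
positions stay strictly above `c`, at most `j`, and strictly below any matching
return of `c`; in particular the path never subsequently uses a return edge. -/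
theorem summaryPath_after_call_edge {n : ℕ} {M : ℕ → ℕ → Prop} {call ret : ℕ → Prop}
    (hm : IsMatching n M call ret) {i j k q : ℕ} {f : ℕ → ℕ}
    (hpath : IsSummaryPath M i j f k) (hq : q < k)
    (hcalledge : call (f q) ∧ f (q + 1) = f q + 1 ∧ ¬ ret (f (q + 1))) :
    (∀ p, q < p → p ≤ k → f q < f p ∧ f p ≤ j ∧ ∀ r, M (f q) r → f p < r) ∧
    (∀ p, q < p → p < k →
      ¬ (f (p + 1) = f p + 1 ∧ ret (f (p + 1)) ∧ ¬ call (f p))) := by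
  obtain ⟨hcall, -, hnext⟩ := hcalledge
  have ⟨_, _, _, hMcr, _, _, hnest⟩ := hm
  have hnoret : ¬ ∃ r, M (f q) r ∧ r ≤ j :=
    (hpath.2.2.2 q hq).not_exists_match_of_not_ret hm hnext
  refine ⟨fun p hqp hpk => ⟨hpath.apply_lt_apply hqp hpk, hpath.le_target hpk,
    fun r hr => lt_of_not_ge fun hrp => hnoret ⟨r, hr, hrp.trans (hpath.le_target hpk)⟩⟩, ?_⟩
  rintro p hqp hpk ⟨hsucc, hret, hncall⟩
  have hpj : f (p + 1) ≤ j := hpath.le_target hpk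
  obtain ⟨m, hqm, hmp, hqm' | hmp'⟩ :=
    hnest (f q) (f (p + 1)) (hpath.apply_le_apply (by omega) hpk) hcall hret
  · exact hnoret ⟨m, hqm', hmp.trans hpj⟩
  obtain ⟨hmcall, -, hmlt⟩ := hMcr m _ hmp'
  have hmfp : m < f p := lt_of_le_of_ne (by omega) fun h => hncall (h ▸ hmcall)
  have := hpath.match_le hm hqp.le hpk.le hqm hmfp hmp' hpj
  omega
end
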